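/- For every τ in the open interval ((q−2)/(q−1), 1) and every real Δ ≥ 1 one has 2^(Δ−4) ≤ Π(τ, 2^(−q·((Ξ−2ξ)/(q(1−τ)) + Δ)²)). -/

import Mathlib

open scoped Classical ENNReal
open Real Set Filter

/-- The quadratic function `Q(s) = q·s²`. -/
noncomputable def Qf (q : ℤ) (s : ℝ) : ℝ := (q : ℝ) * s ^ 2

/-- The half-open interval `I_s = [2^(Q(s)), 2^(Q(s)) + Q(s+1) − Q(s) + Ξ)`. -/
noncomputable def Iset (q Ξ : ℤ) (s : ℝ) : Set ℝ :=
  Set.Ico ((2 : ℝ) ^ (Qf q s)) ((2 : ℝ) ^ (Qf q s) + Qf q (s + 1) - Qf q s + (Ξ : ℝ))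

/-- The half-open interval `J_s = [2^(Q(s)) + Q(s+1) − Q(s) + Ξ, 2^(Q(s+1)))`. -/
noncomputable def Jset (q Ξ : ℤ) (s : ℝ) : Set ℝ :=
  Set.Ico ((2 : ℝ) ^ (Qf q s) + Qf q (s + 1) - Qf q s + (Ξ : ℝ)) ((2 : ℝ) ^ (Qf q (s + 1)))

/-- The sequence `(x_j)` in `{0,1}`: `x_j = 0` iff `j + 1 ∈ I_s` for some integer `s ≥ 0`. -/
noncomputable def xseq (q Ξ : ℤ) (j : ℕ) : ℕ :=
  if ∃ s : ℕ, ((j : ℝ) + 1) ∈ Iset q Ξ (s : ℝ) then 0 else 1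

/-- `N(k) = #{ j ∈ {0,…,k−1} : x_j = 0 }`, with `N(0) = 0`. -/
noncomputable def Nf (q Ξ : ℤ) (k : ℕ) : ℕ :=
  ((Finset.range k).filter (fun j => xseq q Ξ j = 0)).card

/-- `B(0) = 0`, `B(1) = 1`, and for `k ≥ 2`,
`B(k) = 1 + #{ j ∈ {0,…,k−2} : x_j ≠ x_{j+1} }`. -/
noncomputable def Bf (q Ξ : ℤ) (k : ℕ) : ℕ :=
  if k = 0 then 0
  else 1 + ((Finset.range (k - 1)).filter (fun j => xseq q Ξ j ≠ xseq q Ξ (j + 1))).card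

/-- The length `|J_s| = 2^(Q(s+1)) − 2^(Q(s)) − (Q(s+1) − Q(s) + Ξ)` of `J_s`. -/
noncomputable def Jlen (q Ξ : ℤ) (s : ℝ) : ℝ :=
  (2 : ℝ) ^ (Qf q (s + 1)) - (2 : ℝ) ^ (Qf q s) - (Qf q (s + 1) - Qf q s + (Ξ : ℝ))

/-- `λ(s) = 1/|J_s|`. -/
noncomputable def lamf (q Ξ : ℤ) (s : ℝ) : ℝ := 1 / Jlen q Ξ s

/-- The two-variable series `Π(τ,λ) = Σ_{k≥0} 2^(−λk − τ·N(k) + τ·ξ·B(k))`, a sum in `[0,∞]`. -/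
noncomputable def Pi2 (q Ξ : ℤ) (ξ τ lam : ℝ) : ℝ≥0∞ :=
  ∑' k : ℕ, ENNReal.ofReal
    ((2 : ℝ) ^ (-lam * (k : ℝ) - τ * (Nf q Ξ k : ℝ) + τ * ξ * (Bf q Ξ k : ℝ)))

/-!
Shifted by one, the zeros of `x` fill the blocks `[2^(q s²), 2^(q s²) + q (2s + 1) + Ξ)`, and the
hypothesis `q + 1 + Ξ ≤ 2^(q-1)` makes each block end before half of the next block start. On the
gap between blocks `S - 1` and `S` the counts are constant, `N = q S² + S Ξ` and `B = 2S`, and the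
gap has at least `2^(q S² - 1)` elements. For `S = ⌊(Ξ - 2ξ) / (q (1 - τ)) + Δ⌋` every `k` in
this gap has `λ k ≤ 1`, so these terms alone contribute at least
`2^((1 - τ) q S² - τ (Ξ - 2ξ) S - 2)`, and the exponent is at least `Δ - 3`.
-/

def InBlocks (a L : ℕ → ℕ) (p : ℕ) : Prop := ∃ s, a s ≤ p ∧ p < a s + L s

def IsBlockBoundary (a L : ℕ → ℕ) (p : ℕ) : Prop := ¬(InBlocks a L p ↔ InBlocks a L (p + 1))

section Blocks

variable {a L : ℕ → ℕ}

lemma blockEnd_lt_of_lt (hgap : ∀ s, a s + L s < a (s + 1)) {s t : ℕ} (hst : s < t) :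
    a s + L s < a t := by
  induction hst with
  | refl => exact hgap s
  | step _ ih => exact (ih.trans_le (Nat.le_add_right _ _)).trans (hgap _)

lemma strictMono_of_blockEnd_lt (hgap : ∀ s, a s + L s < a (s + 1)) : StrictMono a :=
  strictMono_nat_of_lt_succ fun s => (Nat.le_add_right _ _).trans_lt (hgap s)

lemma strictMono_blockEnd (hgap : ∀ s, a s + L s < a (s + 1)) :
    StrictMono fun s => a s + L s :=
  fun _ _ hst => (blockEnd_lt_of_lt hgap hst).trans_le (Nat.le_add_right _ _)

lemma filter_range_inBlocks (hgap : ∀ s, a s + L s < a (s + 1)) {S n : ℕ}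
    (hSn : a S + L S ≤ n) (hnS : n ≤ a (S + 1)) :
    (Finset.range n).filter (InBlocks a L) =
      (Finset.range (S + 1)).biUnion fun s => Finset.Ico (a s) (a s + L s) := by
  ext p
  simp only [Finset.mem_filter, Finset.mem_range, InBlocks, Finset.mem_biUnion, Finset.mem_Ico]
  constructor
  · rintro ⟨hpn, s, hsp, hps⟩
    refine ⟨s, ?_, hsp, hps⟩
    by_contra! hs
    have := (strictMono_of_blockEnd_lt hgap).monotone hs
    omega
  · rintro ⟨s, hs, hsp, hps⟩
    have := (strictMono_blockEnd hgap).monotone (Nat.le_of_lt_succ hs)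
    exact ⟨by omega, s, hsp, hps⟩

lemma count_inBlocks (hgap : ∀ s, a s + L s < a (s + 1)) {S n : ℕ}
    (hSn : a S + L S ≤ n) (hnS : n ≤ a (S + 1)) :
    Nat.count (InBlocks a L) n = ∑ s ∈ Finset.range (S + 1), L s := by
  rw [Nat.count_eq_card_filter_range, filter_range_inBlocks hgap hSn hnS, Finset.card_biUnion]
  · simp
  · intro s hs t ht hst
    wlog hlt : s < t generalizing s t
    · exact (this ht hs hst.symm (by omega)).symm
    have := blockEnd_lt_of_lt hgap hlt
    exact Finset.disjoint_left.2 fun p hs ht => by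
      simp only [Finset.mem_Ico] at hs ht; omega

lemma isBlockBoundary_iff (hgap : ∀ s, a s + L s < a (s + 1)) (hL : ∀ s, 0 < L s) (p : ℕ) :
    IsBlockBoundary a L p ↔ (∃ s, a s = p + 1) ∨ ∃ s, a s + L s = p + 1 := by
  have ha := strictMono_of_blockEnd_lt hgap
  have haL := strictMono_blockEnd hgap
  rw [IsBlockBoundary]
  constructor
  · intro hchange
    by_cases hp : InBlocks a L p
    · obtain ⟨s, hsp, hps⟩ := hp
      refine Or.inr ⟨s, ?_⟩
      by_contra hne
      exact hchange (iff_of_true ⟨s, hsp, hps⟩ ⟨s, by omega, by omega⟩)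
    · obtain ⟨s, hsp, hps⟩ : InBlocks a L (p + 1) := by tauto
      refine Or.inl ⟨s, ?_⟩
      by_contra hne
      exact hp ⟨s, by omega, by omega⟩
  · rintro (⟨s, hs⟩ | ⟨s, hs⟩)
    · refine fun h => (h.2 ⟨s, hs.le, by have := hL s; omega⟩).elim fun t ⟨htp, hpt⟩ => ?_
      rcases lt_or_ge t s with hts | hst
      · have := blockEnd_lt_of_lt hgap hts; omega
      · have := ha.monotone hst; omega
    · refine fun h => (h.1 ⟨s, by have := hL s; omega, by omega⟩).elim fun t ⟨htp, hpt⟩ => ?_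
      rcases le_or_gt t s with hts | hst
      · have := haL.monotone hts; omega
      · have := blockEnd_lt_of_lt hgap hst; omega

lemma map_succ_filter_range_isBlockBoundary (hgap : ∀ s, a s + L s < a (s + 1))
    (hL : ∀ s, 0 < L s) (ha₀ : 0 < a 0) {S n : ℕ} (hSn : a S + L S ≤ n) (hnS : n < a (S + 1)) :
    ((Finset.range n).filter (IsBlockBoundary a L)).map (addRightEmbedding 1) =
      (Finset.range (S + 1)).image a ∪ (Finset.range (S + 1)).image fun s => a s + L s := by
  have ha := strictMono_of_blockEnd_lt hgap
  have haL := strictMono_blockEnd hgap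
  ext r
  simp only [Finset.mem_map, Finset.mem_filter, Finset.mem_range, addRightEmbedding_apply,
    isBlockBoundary_iff hgap hL, Finset.mem_union, Finset.mem_image]
  constructor
  · rintro ⟨p, ⟨hpn, ⟨s, hs⟩ | ⟨s, hs⟩⟩, rfl⟩
    · refine Or.inl ⟨s, ?_, hs⟩
      by_contra! hSs
      have := ha.monotone hSs
      omega
    · refine Or.inr ⟨s, ?_, hs⟩
      by_contra! hSs
      have := ha.monotone hSs
      omega
  · rintro (⟨s, hs, rfl⟩ | ⟨s, hs, rfl⟩)
    · have := ha.monotone (Nat.zero_le s)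
      have := ha.monotone (Nat.le_of_lt_succ hs)
      exact ⟨a s - 1, ⟨by omega, Or.inl ⟨s, by omega⟩⟩, by omega⟩
    · have := haL.monotone (Nat.le_of_lt_succ hs)
      have := hL s
      exact ⟨a s + L s - 1, ⟨by omega, Or.inr ⟨s, by omega⟩⟩, by omega⟩

lemma count_isBlockBoundary (hgap : ∀ s, a s + L s < a (s + 1))
    (hL : ∀ s, 0 < L s) (ha₀ : 0 < a 0) {S n : ℕ} (hSn : a S + L S ≤ n) (hnS : n < a (S + 1)) :
    Nat.count (IsBlockBoundary a L) n = 2 * (S + 1) := by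
  have hdisj : Disjoint ((Finset.range (S + 1)).image a)
      ((Finset.range (S + 1)).image fun s => a s + L s) := by
    refine Finset.disjoint_left.2 fun r hr hr' => ?_
    simp only [Finset.mem_image] at hr hr'
    obtain ⟨⟨s, -, rfl⟩, ⟨t, -, hts⟩⟩ := And.intro hr hr'
    rcases lt_or_ge t s with hlt | hle
    · have := blockEnd_lt_of_lt hgap hlt; omega
    · have := (strictMono_of_blockEnd_lt hgap).monotone hle; have := hL t; omega
  rw [Nat.count_eq_card_filter_range, ← Finset.card_map (addRightEmbedding 1),
    map_succ_filter_range_isBlockBoundary hgap hL ha₀ hSn hnS, Finset.card_union_of_disjoint hdisj,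
    Finset.card_image_of_injective _ (strictMono_of_blockEnd_lt hgap).injective,
    Finset.card_image_of_injective _ (strictMono_blockEnd hgap).injective, Finset.card_range]
  ring

end Blocks

def blockStart (q s : ℕ) : ℕ := 2 ^ (q * s ^ 2)

def blockLength (q : ℕ) (Ξ : ℤ) (s : ℕ) : ℕ := ((q : ℤ) * (2 * s + 1) + Ξ).toNat

section Sequence

variable {q : ℕ} {Ξ : ℤ}

lemma blockLength_cast (hqΞ : 1 ≤ (q : ℤ) + Ξ) (s : ℕ) :
    (blockLength q Ξ s : ℤ) = q * (2 * s + 1) + Ξ := by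
  have : (q : ℤ) ≤ q * (2 * s + 1) := le_mul_of_one_le_right (by positivity) (by omega)
  rw [blockLength, Int.toNat_of_nonneg (by omega)]

lemma blockLength_pos (hqΞ : 1 ≤ (q : ℤ) + Ξ) (s : ℕ) : 0 < blockLength q Ξ s := by
  have := blockLength_cast hqΞ s
  have : (q : ℤ) ≤ q * (2 * s + 1) := le_mul_of_one_le_right (by positivity) (by omega)
  omega

lemma two_mul_blockEnd_le (hqΞ : 1 ≤ (q : ℤ) + Ξ) (hpow : 2 * ((q : ℤ) + 1 + Ξ) ≤ 2 ^ q)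
    (s : ℕ) : 2 * (blockStart q s + blockLength q Ξ s) ≤ blockStart q (s + 1) := by
  have hsplit : blockStart q (s + 1) = blockStart q s * (2 ^ q * 2 ^ (2 * q * s)) := by
    simp only [blockStart, ← pow_add]; ring_nf
  have hstart : 1 ≤ blockStart q s := Nat.one_le_two_pow
  have hbern : 2 * q * s + 1 ≤ 2 ^ (2 * q * s) := Nat.lt_two_pow_self
  have hlen : 2 * (1 + blockLength q Ξ s) ≤ 2 ^ q * 2 ^ (2 * q * s) := by
    zify at hbern ⊢
    rw [blockLength_cast hqΞ]
    have h4 : (4 : ℤ) ≤ 2 ^ q := by linarith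
    nlinarith [mul_le_mul_of_nonneg_left hbern (by positivity : (0 : ℤ) ≤ 2 ^ q),
      mul_nonneg (sub_nonneg.2 h4) (by positivity : (0 : ℤ) ≤ q * s)]
  rw [hsplit]
  nlinarith

lemma blockEnd_lt (hqΞ : 1 ≤ (q : ℤ) + Ξ) (hpow : 2 * ((q : ℤ) + 1 + Ξ) ≤ 2 ^ q) (s : ℕ) :
    blockStart q s + blockLength q Ξ s < blockStart q (s + 1) := by
  have := two_mul_blockEnd_le hqΞ hpow s
  have := blockLength_pos hqΞ s
  omega

lemma mem_Iset_iff (hqΞ : 1 ≤ (q : ℤ) + Ξ) (s p : ℕ) :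
    (p : ℝ) ∈ Iset q Ξ s ↔ blockStart q s ≤ p ∧ p < blockStart q s + blockLength q Ξ s := by
  have hstart : (2 : ℝ) ^ Qf q s = blockStart q s := by
    have : Qf q s = ((q * s ^ 2 : ℕ) : ℝ) := by simp [Qf]
    rw [this, Real.rpow_natCast, blockStart]
    push_cast
    rfl
  have hlen : Qf q (s + 1) - Qf q s + Ξ = blockLength q Ξ s := by
    have hcast : (blockLength q Ξ s : ℝ) = q * (2 * s + 1) + Ξ := by
      exact_mod_cast blockLength_cast hqΞ s
    rw [hcast, Qf, Qf]
    push_cast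
    ring
  rw [Iset, Set.mem_Ico, add_sub_assoc, add_assoc, hlen, hstart]
  norm_cast

lemma xseq_eq (hqΞ : 1 ≤ (q : ℤ) + Ξ) (j : ℕ) :
    xseq q Ξ j = if InBlocks (blockStart q) (blockLength q Ξ) (j + 1) then 0 else 1 := by
  have hmem (s : ℕ) : ((j : ℝ) + 1) ∈ Iset q Ξ s ↔
      blockStart q s ≤ j + 1 ∧ j + 1 < blockStart q s + blockLength q Ξ s := by
    exact_mod_cast mem_Iset_iff hqΞ s (j + 1)
  exact if_congr (exists_congr hmem) rfl rfl

lemma not_inBlocks_zero : ¬InBlocks (blockStart q) (blockLength q Ξ) 0 :=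
  fun ⟨s, hs, _⟩ => by have : 1 ≤ blockStart q s := Nat.one_le_two_pow; omega

lemma Nf_eq_count (hqΞ : 1 ≤ (q : ℤ) + Ξ) (k : ℕ) :
    Nf q Ξ k = Nat.count (InBlocks (blockStart q) (blockLength q Ξ)) (k + 1) := by
  simp [Nf, ← Nat.count_eq_card_filter_range, Nat.count_succ', xseq_eq hqΞ, not_inBlocks_zero]

lemma Bf_eq_count (hqΞ : 1 ≤ (q : ℤ) + Ξ) {k : ℕ} (hk : 0 < k) :
    Bf q Ξ k = Nat.count (IsBlockBoundary (blockStart q) (blockLength q Ξ)) k := by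
  obtain ⟨k, rfl⟩ := Nat.exists_eq_add_of_lt hk
  have hone : InBlocks (blockStart q) (blockLength q Ξ) 1 :=
    ⟨0, by simp [blockStart], by simp [blockStart, blockLength_pos hqΞ 0]⟩
  have hne (j : ℕ) : xseq q Ξ j ≠ xseq q Ξ (j + 1) ↔
      IsBlockBoundary (blockStart q) (blockLength q Ξ) (j + 1) := by
    rw [IsBlockBoundary, xseq_eq hqΞ, xseq_eq hqΞ]
    split_ifs <;> simp_all
  simp [Bf, ← Nat.count_eq_card_filter_range, Nat.count_succ', hne, IsBlockBoundary,
    not_inBlocks_zero, hone, add_comm]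

lemma sum_range_blockLength (hqΞ : 1 ≤ (q : ℤ) + Ξ) (n : ℕ) :
    ∑ s ∈ Finset.range n, (blockLength q Ξ s : ℤ) = q * n ^ 2 + n * Ξ := by
  induction n with
  | zero => simp
  | succ n ih =>
    rw [Finset.sum_range_succ, ih, blockLength_cast hqΞ]
    push_cast
    ring

lemma Nf_of_mem_gap (hqΞ : 1 ≤ (q : ℤ) + Ξ) (hpow : 2 * ((q : ℤ) + 1 + Ξ) ≤ 2 ^ q) {n k : ℕ}
    (hnk : blockStart q n + blockLength q Ξ n ≤ k) (hkn : k < blockStart q (n + 1)) :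
    (Nf q Ξ k : ℤ) = q * (n + 1) ^ 2 + (n + 1) * Ξ := by
  rw [Nf_eq_count hqΞ, count_inBlocks (blockEnd_lt hqΞ hpow) (by omega) hkn]
  push_cast
  exact_mod_cast sum_range_blockLength hqΞ (n + 1)

lemma Bf_of_mem_gap (hqΞ : 1 ≤ (q : ℤ) + Ξ) (hpow : 2 * ((q : ℤ) + 1 + Ξ) ≤ 2 ^ q) {n k : ℕ}
    (hnk : blockStart q n + blockLength q Ξ n ≤ k) (hkn : k < blockStart q (n + 1)) :
    Bf q Ξ k = 2 * (n + 1) := by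
  have := blockLength_pos hqΞ n
  rw [Bf_eq_count hqΞ (by omega)]
  exact count_isBlockBoundary (blockEnd_lt hqΞ hpow) (blockLength_pos hqΞ)
    Nat.one_le_two_pow hnk hkn

end Sequence

lemma le_Pi2_of_gap {q : ℕ} {Ξ : ℤ} (hqΞ : 1 ≤ (q : ℤ) + Ξ)
    (hpow : 2 * ((q : ℤ) + 1 + Ξ) ≤ 2 ^ q) (ξ τ : ℝ) {lam : ℝ} (hlam : 0 ≤ lam) (n : ℕ) :
    ENNReal.ofReal (2 ^ ((q : ℝ) * (n + 1) ^ 2 - 1 - lam * 2 ^ ((q : ℝ) * (n + 1) ^ 2)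
        - τ * (q * (n + 1) ^ 2 + (n + 1) * Ξ) + τ * ξ * (2 * (n + 1)))) ≤ Pi2 q Ξ ξ τ lam := by
  set A := blockStart q n + blockLength q Ξ n
  set E := blockStart q (n + 1)
  have hE : (E : ℝ) = 2 ^ ((q : ℝ) * (n + 1) ^ 2) := by
    have hexp : (q : ℝ) * (n + 1) ^ 2 = ((q * (n + 1) ^ 2 : ℕ) : ℝ) := by push_cast; rfl
    rw [hexp, Real.rpow_natCast]
    simp [E, blockStart]
  set t : ℝ := 2 ^ (-lam * E - τ * (q * (n + 1) ^ 2 + (n + 1) * Ξ) + τ * ξ * (2 * (n + 1)))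
  have hterm : ∀ k ∈ Finset.Ico A E, ENNReal.ofReal t ≤ ENNReal.ofReal
      ((2 : ℝ) ^ (-lam * (k : ℝ) - τ * (Nf q Ξ k : ℝ) + τ * ξ * (Bf q Ξ k : ℝ))) := by
    intro k hk
    obtain ⟨hAk, hkE⟩ := Finset.mem_Ico.1 hk
    have hN : (Nf q Ξ k : ℝ) = q * (n + 1) ^ 2 + (n + 1) * Ξ := by
      exact_mod_cast Nf_of_mem_gap hqΞ hpow hAk hkE
    have hB : (Bf q Ξ k : ℝ) = 2 * (n + 1) := by
      exact_mod_cast Bf_of_mem_gap hqΞ hpow hAk hkE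
    have hlamk : lam * k ≤ lam * E := mul_le_mul_of_nonneg_left (by exact_mod_cast hkE.le) hlam
    rw [hN, hB]
    exact ENNReal.ofReal_le_ofReal (Real.rpow_le_rpow_of_exponent_le one_le_two (by linarith))
  have hcard : (E : ℝ) / 2 ≤ (Finset.Ico A E).card := by
    have := two_mul_blockEnd_le hqΞ hpow n
    rw [Nat.card_Ico, div_le_iff₀ two_pos]
    exact_mod_cast (by omega : E ≤ (E - A) * 2)
  calc ENNReal.ofReal (2 ^ ((q : ℝ) * (n + 1) ^ 2 - 1 - lam * 2 ^ ((q : ℝ) * (n + 1) ^ 2)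
        - τ * (q * (n + 1) ^ 2 + (n + 1) * Ξ) + τ * ξ * (2 * (n + 1))))
      = ENNReal.ofReal (E / 2 * t) := by
        simp only [t, hE]
        rw [← Real.rpow_sub_one two_ne_zero, ← Real.rpow_add two_pos]
        ring_nf
    _ ≤ ENNReal.ofReal ((Finset.Ico A E).card * t) :=
        ENNReal.ofReal_le_ofReal (mul_le_mul_of_nonneg_right hcard (by positivity))
    _ = (Finset.Ico A E).card • ENNReal.ofReal t := by
        rw [ENNReal.ofReal_mul (by positivity), ENNReal.ofReal_natCast, nsmul_eq_mul]
    _ ≤ ∑ k ∈ Finset.Ico A E, ENNReal.ofReal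
          ((2 : ℝ) ^ (-lam * (k : ℝ) - τ * (Nf q Ξ k : ℝ) + τ * ξ * (Bf q Ξ k : ℝ))) :=
        Finset.card_nsmul_le_sum _ _ _ hterm
    _ ≤ Pi2 q Ξ ξ τ lam := ENNReal.sum_le_tsum _

lemma sub_one_le_quadratic_exponent {q τ c Δ S : ℝ} (hq : 0 < q) (hτ : τ < 1) (hc : 1 ≤ c)
    (hΔ : 1 ≤ Δ) (hS : c / (q * (1 - τ)) + Δ - 1 < S) :
    Δ - 1 ≤ (1 - τ) * q * S ^ 2 - τ * S * c := by
  set m := c / (q * (1 - τ))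
  have hqτ : 0 < q * (1 - τ) := mul_pos hq (by linarith)
  have hcm : q * (1 - τ) * m = c := mul_div_cancel₀ c hqτ.ne'
  have hm : 0 < m := div_pos (by linarith) hqτ
  have hSm : Δ - 1 < S - m := by linarith
  have hmS : m * (q * (1 - τ)) * (S - m) ≤ S * (q * (1 - τ)) * (S - m) :=
    mul_le_mul_of_nonneg_right (mul_le_mul_of_nonneg_right (by linarith) hqτ.le) (by linarith)
  nlinarith [mul_nonneg (mul_nonneg (by linarith : (0 : ℝ) ≤ 1 - τ) (by linarith : (0 : ℝ) ≤ S))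
    (by linarith : (0 : ℝ) ≤ c)]

theorem stmt10_general (Ξ q : ℤ) (hq : 3 ≤ q) (hqΞ : 1 ≤ q + Ξ)
    (hpow : (q : ℝ) + 1 + (Ξ : ℝ) ≤ (2 : ℝ) ^ ((q : ℝ) - 1))
    (ξ : ℝ) (hξ1 : 1 ≤ (Ξ : ℝ) - 2 * ξ) :
    ∀ τ : ℝ, ((q : ℝ) - 2) / ((q : ℝ) - 1) < τ → τ < 1 → ∀ Δ : ℝ, 1 ≤ Δ →
      ENNReal.ofReal ((2 : ℝ) ^ (Δ - 4)) ≤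
        Pi2 q Ξ ξ τ
          ((2 : ℝ) ^ (-(q : ℝ) *
            (((Ξ : ℝ) - 2 * ξ) / ((q : ℝ) * (1 - τ)) + Δ) ^ 2)) := by
  intro τ _ hτ Δ hΔ
  lift q to ℕ using (by omega)
  push_cast at hpow hξ1 ⊢
  have hpow' : 2 * ((q : ℤ) + 1 + Ξ) ≤ 2 ^ q := by
    rw [Real.rpow_sub_one two_ne_zero, Real.rpow_natCast, le_div_iff₀ two_pos] at hpow
    exact_mod_cast (by linarith : 2 * ((q : ℝ) + 1 + Ξ) ≤ 2 ^ q)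
  have hq0 : (0 : ℝ) < q := by exact_mod_cast (by omega : 0 < q)
  set x := ((Ξ : ℝ) - 2 * ξ) / (q * (1 - τ)) + Δ
  have hx : 1 ≤ x := le_add_of_nonneg_of_le (div_nonneg (by linarith)
    (mul_nonneg hq0.le (by linarith))) hΔ
  obtain ⟨n, hn⟩ : ∃ n : ℕ, ⌊x⌋₊ = n + 1 :=
    ⟨⌊x⌋₊ - 1, by have := (Nat.one_le_floor_iff x).2 hx; omega⟩
  have hnx : (n : ℝ) + 1 ≤ x := by exact_mod_cast hn ▸ Nat.floor_le (by linarith)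
  have hxn : x - 1 < (n : ℝ) + 1 := by exact_mod_cast hn ▸ Nat.sub_one_lt_floor x
  have hlam : 2 ^ (-(q : ℝ) * x ^ 2) * 2 ^ ((q : ℝ) * (n + 1) ^ 2) ≤ (1 : ℝ) := by
    rw [← Real.rpow_add two_pos]
    have := mul_le_mul_of_nonneg_left (pow_le_pow_left₀ (by positivity) hnx 2) hq0.le
    exact Real.rpow_le_one_of_one_le_of_nonpos one_le_two (by linarith)
  have hexp := sub_one_le_quadratic_exponent (S := n + 1) hq0 hτ hξ1 hΔ (by linarith)
  refine (le_Pi2_of_gap hqΞ hpow' ξ τ (by positivity) n).trans' ?_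
  exact ENNReal.ofReal_le_ofReal (Real.rpow_le_rpow_of_exponent_le one_le_two (by linarith))

theorem stmt10 (Ξ q : ℤ) (hq : 3 ≤ q) (hqΞ : 1 ≤ q + Ξ)
    (hpow : (q : ℝ) + 1 + (Ξ : ℝ) ≤ (2 : ℝ) ^ ((q : ℝ) - 1))
    (ξ : ℝ) (hξ1 : 1 ≤ (Ξ : ℝ) - 2 * ξ) (hξ2 : (Ξ : ℝ) - 2 * ξ ≤ 2) :
    ∀ τ : ℝ, ((q : ℝ) - 2) / ((q : ℝ) - 1) < τ → τ < 1 → ∀ Δ : ℝ, 1 ≤ Δ →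
      ENNReal.ofReal ((2 : ℝ) ^ (Δ - 4)) ≤
        Pi2 q Ξ ξ τ
          ((2 : ℝ) ^ (-(q : ℝ) *
            (((Ξ : ℝ) - 2 * ξ) / ((q : ℝ) * (1 - τ)) + Δ) ^ 2)) :=
  stmt10_general Ξ q hq hqΞ hpow ξ hξ1
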